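/- arXiv:2502.16382 — 3 statements merged into one kernel-verified Lean document; each statement's English description precedes it below -/
import Mathlib

section
/- For every constant step size s > 0 there are infinitely many positive integers n for which there exists a finite connected simple graph G on n vertices and an edge f of G such that one step of the normalized Ricci flow with initial unit edge weights produces w^{(1)}(f) < 0. (This is the paper's Theorem 1; the proof uses the graphs G_{q,k} below with f = {s,t}, taking q fixed and sufficiently large relative to 1/s and letting k → ∞.) -/
/-!
If `u` and `v` are adjacent and have the same closed neighbourhood, then `P_u = P_v`, so the edge
`uv` has curvature `1` and its new weight is `(s / m) · Σ_h C(h)`: it is negative as soon as the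
total curvature is. Take the star centred at `r` together with one extra edge `ab` between two of
its leaves. The edge `ab` joins such twins, and every pendant edge `rℓ` has curvature at most
`3 / n - 1 / 2`, as one sees by testing the transport cost against the `1`-Lipschitz potential
`2·[ℓ] + [r]`. With `n ≥ 16` vertices the total curvature is therefore at most
`3 + (n - 3)(3 / n - 1 / 2) < 0`.
-/

/-- Earth Mover's Distance between two distributions `μ ν : V → ℝ` w.r.t. a
cost function `d : V → V → ℝ`: the minimum (infimum) of the total transport cost
over all feasible transport plans. -/
noncomputable def EMD {V : Type} (d : V → V → ℝ) (μ ν : V → ℝ) : ℝ :=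
  sInf { c : ℝ | ∃ z : V → V → ℝ,
    (∀ u v, 0 ≤ z u v) ∧ (∀ u, ∑ᶠ v, z u v = μ u) ∧ (∀ v, ∑ᶠ u, z u v = ν v) ∧
    c = ∑ᶠ u, ∑ᶠ v, d u v * z u v }

/-- The degree of a vertex: the number of its neighbours. -/
noncomputable def degC {V : Type} (G : SimpleGraph V) (u : V) : ℕ :=
  Nat.card {x | G.Adj u x}

open Classical in
/-- The uniform probability distribution on the closed neighbourhood of `u`. -/
noncomputable def Pdist {V : Type} (G : SimpleGraph V) (u : V) : V → ℝ :=
  fun w => if w = u ∨ G.Adj u w then ((degC G u : ℝ) + 1)⁻¹ else 0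

/-- The graph distance, as a real-valued cost function. -/
noncomputable def gdist {V : Type} (G : SimpleGraph V) : V → V → ℝ :=
  fun a b => (G.dist a b : ℝ)

/-- The total variation distance between the closed-neighbourhood distributions of `u`, `v`. -/
noncomputable def tvd {V : Type} (G : SimpleGraph V) (u v : V) : ℝ :=
  (1 / 2) * ∑ᶠ w, |Pdist G u w - Pdist G v w|

/-- The Ollivier–Ricci curvature of the (ordered) pair `u v`. -/
noncomputable def ricci {V : Type} (G : SimpleGraph V) (u v : V) : ℝ :=
  1 - EMD (gdist G) (Pdist G u) (Pdist G v)

lemma EMD_comm {V : Type} [Finite V] (d : V → V → ℝ) (hd : ∀ a b, d a b = d b a)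
    (μ ν : V → ℝ) : EMD d μ ν = EMD d ν μ := by
  cases nonempty_fintype V
  unfold EMD
  congr 1
  ext c
  simp only [Set.mem_setOf_eq]
  constructor <;> rintro ⟨z, h0, h1, h2, rfl⟩ <;>
    refine ⟨fun a b => z b a, fun a b => h0 b a, h2, h1, ?_⟩ <;>
    · simp only [finsum_eq_sum_of_fintype]
      rw [Finset.sum_comm]
      exact Finset.sum_congr rfl fun a _ => Finset.sum_congr rfl fun b _ => by rw [hd]

/-- The Ollivier–Ricci curvature as a function on edges (elements of `Sym2 V`). -/
noncomputable def ricciEdge {V : Type} [Finite V] (G : SimpleGraph V) : Sym2 V → ℝ :=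
  Sym2.lift ⟨fun u v => ricci G u v, fun u v => by
    show ricci G u v = ricci G v u
    unfold ricci
    rw [EMD_comm (gdist G) (fun a b => by unfold gdist; rw [SimpleGraph.dist_comm])]⟩

section EMD

variable {V : Type} {d : V → V → ℝ} {μ ν : V → ℝ}

lemma EMD_le_cost (hd : ∀ a b, 0 ≤ d a b) (z : V → V → ℝ) (hz : ∀ u v, 0 ≤ z u v)
    (hμ : ∀ u, ∑ᶠ v, z u v = μ u) (hν : ∀ v, ∑ᶠ u, z u v = ν v) :
    EMD d μ ν ≤ ∑ᶠ u, ∑ᶠ v, d u v * z u v := by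
  refine csInf_le ⟨0, ?_⟩ ⟨z, hz, hμ, hν, rfl⟩
  rintro c ⟨z, hz, -, -, rfl⟩
  exact finsum_nonneg fun u => finsum_nonneg fun v => mul_nonneg (hd u v) (hz u v)

lemma EMD_nonneg (hd : ∀ a b, 0 ≤ d a b) : 0 ≤ EMD d μ ν := by
  refine Real.sInf_nonneg ?_
  rintro c ⟨z, hz, -, -, rfl⟩
  exact finsum_nonneg fun u => finsum_nonneg fun v => mul_nonneg (hd u v) (hz u v)

lemma EMD_self (hd : ∀ a b, 0 ≤ d a b) (hdiag : ∀ a, d a a = 0) (hμ : ∀ u, 0 ≤ μ u) :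
    EMD d μ μ = 0 := by
  classical
  refine le_antisymm ?_ (EMD_nonneg hd)
  have hcost := EMD_le_cost (μ := μ) (ν := μ) hd (fun u v => if u = v then μ u else 0)
    (fun u v => by split_ifs <;> simp [hμ])
    (fun u => by rw [finsum_eq_single _ u fun v hv => if_neg hv.symm, if_pos rfl])
    (fun v => by rw [finsum_eq_single _ v fun u hu => if_neg hu, if_pos rfl])
  have hdiag_cost : ∀ u, ∑ᶠ v, d u v * (if u = v then μ u else 0) = 0 := fun u => by
    rw [finsum_eq_single _ u fun v hv => by simp [hv.symm], if_pos rfl, hdiag, zero_mul]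
  simpa only [hdiag_cost, finsum_zero] using hcost

lemma sub_le_EMD [Fintype V] (g : V → ℝ) (hg : ∀ a b, g b - g a ≤ d a b)
    (hμ : ∀ u, 0 ≤ μ u) (hν : ∀ v, 0 ≤ ν v) (hμ1 : ∑ u, μ u = 1) (hν1 : ∑ v, ν v = 1) :
    ∑ v, g v * ν v - ∑ u, g u * μ u ≤ EMD d μ ν := by
  refine le_csInf ⟨_, fun u v => μ u * ν v, fun u v => mul_nonneg (hμ u) (hν v),
    fun u => ?_, fun v => ?_, rfl⟩ ?_
  · simp [finsum_eq_sum_of_fintype, ← Finset.mul_sum, hν1]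
  · simp [finsum_eq_sum_of_fintype, ← Finset.sum_mul, hμ1]
  rintro c ⟨z, hz, hzμ, hzν, rfl⟩
  simp only [finsum_eq_sum_of_fintype] at hzμ hzν ⊢
  calc ∑ v, g v * ν v - ∑ u, g u * μ u
      = ∑ u, ∑ v, (g v - g u) * z u v := by
        simp only [← hzμ, ← hzν, Finset.mul_sum, sub_mul, Finset.sum_sub_distrib]
        rw [Finset.sum_comm]
    _ ≤ ∑ u, ∑ v, d u v * z u v := by
        gcongr with u _ v _
        exacts [hz u v, hg u v]

end EMD

section Curvature

variable {V : Type} (G : SimpleGraph V)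

lemma gdist_nonneg (a b : V) : 0 ≤ gdist G a b := Nat.cast_nonneg _

lemma gdist_self (a : V) : gdist G a a = 0 := by simp [gdist]

lemma ricci_le_one (u v : V) : ricci G u v ≤ 1 := by
  have := EMD_nonneg (μ := Pdist G u) (ν := Pdist G v) (gdist_nonneg G)
  rw [ricci]
  linarith

lemma Pdist_nonneg (u w : V) : 0 ≤ Pdist G u w := by
  unfold Pdist
  split_ifs <;> positivity

lemma degC_add_one [Finite V] (u : V) :
    degC G u + 1 = (insert u (G.neighborSet u)).ncard := by
  rw [Set.ncard_insert_of_notMem (G.notMem_neighborSet_self (a := u)), degC, Nat.card_coe_set_eq]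
  rfl

lemma Pdist_eq_of_insert_neighborSet_eq [Finite V] {u v : V}
    (h : insert u (G.neighborSet u) = insert v (G.neighborSet v)) : Pdist G u = Pdist G v := by
  have hdeg : degC G u = degC G v := by
    simpa only [← degC_add_one, add_left_inj] using congrArg Set.ncard h
  classical
  funext w
  have hw : w = u ∨ G.Adj u w ↔ w = v ∨ G.Adj v w := Set.ext_iff.mp h w
  simp only [Pdist, hdeg]
  exact if_congr hw rfl rfl

lemma sum_Pdist [Fintype V] (u : V) : ∑ w, Pdist G u w = 1 := by
  classical
  have hcard : ((Finset.univ.filter fun w => w = u ∨ G.Adj u w).card : ℝ) = degC G u + 1 := by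
    rw [← Set.ncard_coe_finset, Finset.coe_filter_univ]
    norm_cast
    exact (degC_add_one G u).symm
  simp only [Pdist, Finset.sum_ite, Finset.sum_const, nsmul_eq_mul, mul_zero, add_zero]
  rw [hcard, mul_inv_cancel₀ (by positivity)]

lemma ricci_eq_one_of_Pdist_eq {u v : V} (h : Pdist G u = Pdist G v) : ricci G u v = 1 := by
  rw [ricci, h, EMD_self (gdist_nonneg G) (gdist_self G) (Pdist_nonneg G v), sub_zero]

end Curvature

section Pendant

variable {V : Type} {G : SimpleGraph V} {r ℓ : V}

lemma one_le_gdist (hG : G.Connected) {a b : V} (h : a ≠ b) : 1 ≤ gdist G a b := by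
  have := hG.pos_dist_of_ne h
  unfold gdist
  exact_mod_cast this

lemma two_le_gdist (hG : G.Connected) {a b : V} (h : a ≠ b) (hadj : ¬G.Adj a b) :
    2 ≤ gdist G a b := by
  have h0 := hG.pos_dist_of_ne h
  have h1 : G.dist a b ≠ 1 := fun e => hadj (SimpleGraph.dist_eq_one_iff_adj.mp e)
  unfold gdist
  exact_mod_cast (by omega : 2 ≤ G.dist a b)

lemma degC_eq_one_of_forall_adj_iff (hℓ : ∀ w, G.Adj ℓ w ↔ w = r) : degC G ℓ = 1 := by
  rw [degC, show {x | G.Adj ℓ x} = {r} from Set.ext hℓ, Nat.card_unique]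

lemma ricci_le_of_forall_adj_iff [Fintype V] (hG : G.Connected) (hℓ : ∀ w, G.Adj ℓ w ↔ w = r) :
    ricci G r ℓ ≤ 3 / (degC G r + 1) - 1 / 2 := by
  classical
  have hℓr : ℓ ≠ r := G.ne_of_adj ((hℓ r).2 rfl)
  -- `g = 2·[ℓ] + [r]` is `1`-Lipschitz: every vertex other than `ℓ` and `r` is at distance
  -- at least `2` from `ℓ`.
  let g : V → ℝ := fun x => if x = ℓ then 2 else if x = r then 1 else 0
  have hg : ∀ a b, g b - g a ≤ gdist G a b := by
    intro a b
    rcases eq_or_ne a b with rfl | hab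
    · simp [gdist_self]
    have hga : 0 ≤ g a := by positivity
    have hd := one_le_gdist hG hab
    by_cases hb : b = ℓ
    · rcases eq_or_ne a r with rfl | ha
      · have hgab : g b - g a = 1 := by norm_num [g, hb, hℓr.symm]
        linarith
      · have hd2 := two_le_gdist hG hab fun h => ha ((hℓ a).1 (hb ▸ h).symm)
        have hgb : g b = 2 := by simp [g, hb]
        linarith
    · have hgb : g b ≤ 1 := by simp only [g, if_neg hb]; split_ifs <;> norm_num
      linarith
  have hmean : ∀ μ : V → ℝ, ∑ w, g w * μ w = 2 * μ ℓ + μ r := fun μ => by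
    rw [Fintype.sum_eq_add ℓ r hℓr fun x hx => by simp [g, hx.1, hx.2]]
    simp [g, hℓr.symm]
  have hdual := sub_le_EMD g hg (Pdist_nonneg G r) (Pdist_nonneg G ℓ) (sum_Pdist G r)
    (sum_Pdist G ℓ)
  simp only [hmean, Pdist, degC_eq_one_of_forall_adj_iff hℓ, true_or, or_true, G.adj_comm r ℓ,
    (hℓ r).2 rfl, if_true] at hdual
  rw [ricci, div_eq_mul_inv]
  linarith

end Pendant

section TwinStar

variable {V : Type}

def twinStar (r a b : V) : SimpleGraph V := SimpleGraph.starGraph r ⊔ SimpleGraph.edge a b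

variable {r a b : V}

lemma twinStar_adj {x y : V} :
    (twinStar r a b).Adj x y ↔
      x ≠ y ∧ (x = r ∨ y = r) ∨ (x = a ∧ y = b ∨ x = b ∧ y = a) ∧ x ≠ y := by
  rw [twinStar, SimpleGraph.sup_adj, SimpleGraph.starGraph_adj, SimpleGraph.edge_adj]

lemma connected_twinStar : (twinStar r a b).Connected :=
  (SimpleGraph.connected_starGraph r).mono le_sup_left

lemma insert_neighborSet_twinStar (hra : r ≠ a) (hrb : r ≠ b) :
    insert a ((twinStar r a b).neighborSet a) = insert b ((twinStar r a b).neighborSet b) := by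
  ext w
  simp only [Set.mem_insert_iff, SimpleGraph.mem_neighborSet, twinStar_adj]
  grind

lemma twinStar_adj_iff_of_ne {v : V} (hvr : v ≠ r) (hva : v ≠ a) (hvb : v ≠ b) (w : V) :
    (twinStar r a b).Adj v w ↔ w = r := by
  rw [twinStar_adj]
  grind

lemma degC_twinStar_center [Fintype V] : degC (twinStar r a b) r + 1 = Fintype.card V := by
  rw [degC_add_one]
  have huniv : insert r ((twinStar r a b).neighborSet r) = Set.univ := by
    ext w
    simp only [Set.mem_insert_iff, SimpleGraph.mem_neighborSet, twinStar_adj, Set.mem_univ,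
      iff_true]
    grind
  rw [huniv, Set.ncard_univ, Nat.card_eq_fintype_card]

lemma edgeSet_twinStar [Fintype V] [DecidableEq V] (hab : a ≠ b) :
    (twinStar r a b).edgeSet =
      ↑(insert s(a, b) ((Finset.univ.erase r).image fun v => s(r, v))) := by
  rw [twinStar, SimpleGraph.edgeSet_sup, SimpleGraph.edgeSet_edge_of_ne hab]
  ext e
  induction e using Sym2.ind with | _ x y => ?_
  simp only [Set.mem_union, SimpleGraph.mem_edgeSet, SimpleGraph.starGraph_adj,
    Set.mem_singleton_iff, Finset.coe_insert, Set.mem_insert_iff, Finset.coe_image,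
    Finset.coe_erase, Finset.coe_univ, Set.mem_image, Set.mem_sdiff, Set.mem_univ, true_and]
  rw [or_comm]
  apply or_congr_right
  aesop

lemma sum_ricciEdge_twinStar_le [Fintype V] (hra : r ≠ a) (hrb : r ≠ b) (hab : a ≠ b) :
    ∑ᶠ e ∈ (twinStar r a b).edgeSet, ricciEdge (twinStar r a b) e ≤
      3 + (Fintype.card V - 3) * (3 / Fintype.card V - 1 / 2) := by
  classical
  set G := twinStar r a b
  set S := ((Finset.univ.erase r).erase a).erase b
  have ha : a ∈ Finset.univ.erase r := by simp [hra.symm]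
  have hb : b ∈ (Finset.univ.erase r).erase a := by simp [hrb.symm, hab.symm]
  have hS : (S.card : ℝ) = Fintype.card V - 3 := by
    have h1 : S.card + 1 = ((Finset.univ.erase r).erase a).card := Finset.card_erase_add_one hb
    have h2 := Finset.card_erase_add_one ha
    have h3 := Finset.card_erase_add_one (Finset.mem_univ r)
    rw [Finset.card_univ] at h3
    rw [eq_sub_iff_add_eq]
    exact_mod_cast (by omega : S.card + 3 = Fintype.card V)
  have hpendant : ∀ v ∈ S, ricci G r v ≤ 3 / Fintype.card V - 1 / 2 := by
    intro v hv
    simp only [S, Finset.mem_erase, Finset.mem_univ, and_true] at hv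
    have := ricci_le_of_forall_adj_iff connected_twinStar
      (twinStar_adj_iff_of_ne hv.2.2 hv.2.1 hv.1)
    have hdeg : (degC G r : ℝ) + 1 = Fintype.card V := by exact_mod_cast degC_twinStar_center
    rwa [hdeg] at this
  have hsum := Finset.sum_le_card_nsmul S _ _ hpendant
  rw [edgeSet_twinStar hab, finsum_mem_coe_finset, Finset.sum_insert, Finset.sum_image,
    ← Finset.add_sum_erase _ _ ha, ← Finset.add_sum_erase _ _ hb]
  · simp only [ricciEdge, Sym2.lift_mk]
    rw [nsmul_eq_mul, hS] at hsum
    linarith [ricci_le_one G a b, ricci_le_one G r a, ricci_le_one G r b]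
  · exact fun v _ w _ h => Sym2.congr_right.mp h
  · simp [hra, hrb]

lemma sum_ricciEdge_twinStar_neg [Fintype V] (hra : r ≠ a) (hrb : r ≠ b) (hab : a ≠ b)
    (hV : 16 ≤ Fintype.card V) :
    ∑ᶠ e ∈ (twinStar r a b).edgeSet, ricciEdge (twinStar r a b) e < 0 := by
  refine (sum_ricciEdge_twinStar_le hra hrb hab).trans_lt ?_
  have hn : (16 : ℝ) ≤ Fintype.card V := by exact_mod_cast hV
  have h3 : 3 / (Fintype.card V : ℝ) ≤ 3 / 16 := div_le_div_of_nonneg_left (by norm_num)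
    (by norm_num) hn
  nlinarith

end TwinStar

/-- For every constant step size `s > 0` there are infinitely many
positive integers `n` for which there exists a finite connected simple graph `G` on `n`
vertices and an edge `f` of `G` such that one step of the normalized Ricci flow with
initial unit edge weights produces `w⁽¹⁾(f) < 0`, where
`w⁽¹⁾(f) = 1 - C_G(f) + (s/m) · Σ_{h ∈ E} C_G(h)` and `m = |E|`. -/
theorem normalized_ricci_flow_negative_weight (s : ℝ) (hs : 0 < s) :
    { n : ℕ | 0 < n ∧ ∃ (V : Type) (hV : Finite V) (G : SimpleGraph V) (f : Sym2 V),
      G.Connected ∧ Nat.card V = n ∧ f ∈ G.edgeSet ∧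
      1 - @ricciEdge V hV G f +
        (s / (Nat.card G.edgeSet : ℝ)) * ∑ᶠ h ∈ G.edgeSet, @ricciEdge V hV G h
          < 0 }.Infinite := by
  refine Set.infinite_of_forall_exists_gt fun k => ⟨k + 16, ⟨by omega, ?_⟩, by omega⟩
  have hra : (0 : Fin (k + 16)) ≠ 1 := by simp
  have hrb : (0 : Fin (k + 16)) ≠ 2 := by simp [Fin.ext_iff, Nat.mod_eq_of_lt]
  have hab : (1 : Fin (k + 16)) ≠ 2 := by simp [Fin.ext_iff, Nat.mod_eq_of_lt]
  set G : SimpleGraph (Fin (k + 16)) := twinStar 0 1 2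
  have hf : s(1, 2) ∈ G.edgeSet := by simp [G, twinStar, hab]
  refine ⟨Fin (k + 16), inferInstance, G, s(1, 2), connected_twinStar, by simp, hf, ?_⟩
  have hflat : ricciEdge G s(1, 2) = 1 :=
    ricci_eq_one_of_Pdist_eq G
      (Pdist_eq_of_insert_neighborSet_eq G (insert_neighborSet_twinStar hra hrb))
  have hm : (0 : ℝ) < Nat.card G.edgeSet :=
    Nat.cast_pos.2 (Nat.card_pos_iff.2 ⟨⟨_, hf⟩, inferInstance⟩)
  rw [hflat, sub_self, zero_add]
  exact mul_neg_of_pos_of_neg (div_pos hs hm) (sum_ricciEdge_twinStar_neg hra hrb hab (by simp))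
end

section
/- Let G be a finite connected simple graph with at least two vertices, let u be a vertex of degree 1 with unique neighbor v, and let d = deg_G(v). Then EMD_{dist_G}(P_u, P_v) = 3(d − 1)/(2(d + 1)); equivalently, the Ollivier–Ricci curvature of the pendant edge {u,v} equals C_G({u,v}) = (5 − d)/(2(d + 1)). (This is the corrected form of the paper's bound (eqb3) for edges whose one endpoint has closed neighborhood {u,v}; the paper's printed expression 3/2 − 1/(2d+2) contains an arithmetic slip, the true value being 3/2 − 3/(2(d+1)).) -/
/-! Let `d = deg v`. Transport `P_u` to `P_v` by keeping mass `1/(d+1)` in place at `u` and at `v`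
and sending `1/(2(d+1))` from each of `u`, `v` to each of the `d - 1` other neighbours of `v`,
which lie at distances `2` and `1`; this costs `3(d-1)/(2(d+1))`. The 1-Lipschitz potential
`2 - min (dist u ·) 2` takes the values `2, 1, 0` on `u`, `v` and the other neighbours of `v`, and
its integrals against `P_u` and `P_v` differ by the same amount, so by weak Kantorovich duality
the plan is optimal. -/

open Finset

section Transport

variable {V : Type} [Fintype V]

def IsTransportPlan (μ ν : V → ℝ) (z : V → V → ℝ) : Prop :=
  (∀ a b, 0 ≤ z a b) ∧ (∀ a, ∑ b, z a b = μ a) ∧ (∀ b, ∑ a, z a b = ν b)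

def transportCost (d : V → V → ℝ) (z : V → V → ℝ) : ℝ :=
  ∑ a, ∑ b, d a b * z a b

theorem EMD_eq_sInf_transportCost (d : V → V → ℝ) (μ ν : V → ℝ) :
    EMD d μ ν = sInf {c | ∃ z, IsTransportPlan μ ν z ∧ c = transportCost d z} := by
  simp only [EMD, IsTransportPlan, transportCost, finsum_eq_sum_of_fintype, and_assoc]

theorem IsTransportPlan.sub_le_transportCost {d : V → V → ℝ} {μ ν : V → ℝ} {z : V → V → ℝ}
    (hz : IsTransportPlan μ ν z) {f : V → ℝ} (hf : ∀ a b, f a - f b ≤ d a b) :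
    ∑ a, f a * μ a - ∑ b, f b * ν b ≤ transportCost d z := by
  obtain ⟨hz0, hrow, hcol⟩ := hz
  calc ∑ a, f a * μ a - ∑ b, f b * ν b = ∑ a, ∑ b, (f a - f b) * z a b := by
        simp only [sub_mul, sum_sub_distrib, ← mul_sum, hrow]
        rw [sum_comm (f := fun a b => f b * z a b)]
        simp only [← mul_sum, hcol]
    _ ≤ transportCost d z :=
        sum_le_sum fun a _ => sum_le_sum fun b _ => mul_le_mul_of_nonneg_right (hf a b) (hz0 a b)

theorem EMD_eq_of_transportCost_eq_sub {d : V → V → ℝ} {μ ν : V → ℝ} {z : V → V → ℝ}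
    {f : V → ℝ} {c : ℝ} (hz : IsTransportPlan μ ν z) (hf : ∀ a b, f a - f b ≤ d a b)
    (hcost : transportCost d z = c) (hgap : ∑ a, f a * μ a - ∑ b, f b * ν b = c) :
    EMD d μ ν = c := by
  have hlower : ∀ c' ∈ {c | ∃ z, IsTransportPlan μ ν z ∧ c = transportCost d z}, c ≤ c' := by
    rintro _ ⟨z', hz', rfl⟩
    exact hgap ▸ hz'.sub_le_transportCost hf
  rw [EMD_eq_sInf_transportCost]
  exact le_antisymm (csInf_le ⟨c, hlower⟩ ⟨z, hz, hcost.symm⟩)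
    (le_csInf ⟨c, z, hz, hcost.symm⟩ hlower)

end Transport

namespace SimpleGraph

variable {V : Type}

theorem degC_eq_degree (G : SimpleGraph V) (v : V) [Fintype (G.neighborSet v)] :
    degC G v = G.degree v := by
  rw [degC, ← card_neighborSet_eq_degree, ← Nat.card_eq_fintype_card]
  rfl

variable {G : SimpleGraph V} {u v : V}

theorem Connected.min_gdist_sub_min_gdist_le (hG : G.Connected) (u a b : V) (r : ℝ) :
    min (gdist G u b) r - min (gdist G u a) r ≤ gdist G a b := by
  have htri : gdist G u b ≤ gdist G u a + gdist G a b := by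
    simp only [gdist]
    exact_mod_cast hG.dist_triangle
  have hpos : 0 ≤ gdist G a b := Nat.cast_nonneg _
  rcases min_cases (gdist G u a) r with ⟨ha, _⟩ | ⟨ha, _⟩ <;> rw [ha] <;>
    linarith [min_le_left (gdist G u b) r, min_le_right (gdist G u b) r]

theorem dist_eq_two_of_adj_of_forall_adj_eq (huv : G.Adj u v) (huniq : ∀ w, G.Adj u w → w = v)
    {w : V} (hvw : G.Adj v w) (hwu : w ≠ u) : G.dist u w = 2 := by
  have hcommon : v ∈ G.commonNeighbors u w := (G.mem_commonNeighbors).mpr ⟨huv, hvw.symm⟩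
  rw [dist, edist_eq_two_iff.mpr ⟨hwu.symm, fun huw => hvw.ne' (huniq w huw), v, hcommon⟩]
  rfl

variable [Fintype V] [DecidableRel G.Adj]

theorem neighborFinset_eq_singleton (huv : G.Adj u v) (huniq : ∀ w, G.Adj u w → w = v) :
    G.neighborFinset u = {v} := by
  ext w
  simp only [mem_neighborFinset, mem_singleton]
  exact ⟨huniq w, fun h => h ▸ huv⟩

variable [DecidableEq V]

variable (G) in
theorem Pdist_eq_ite (v w : V) :
    Pdist G v w = if w ∈ insert v (G.neighborFinset v) then ((G.degree v : ℝ) + 1)⁻¹ else 0 := by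
  simp [Pdist, degC_eq_degree]

variable (G) in
theorem sum_mul_Pdist (v : V) (g : V → ℝ) :
    ∑ w, g w * Pdist G v w = (∑ w ∈ insert v (G.neighborFinset v), g w) / (G.degree v + 1) := by
  simp only [Pdist_eq_ite, mul_ite, mul_zero, sum_ite_mem, univ_inter, ← sum_mul, div_eq_mul_inv]

variable (G) in
noncomputable def pendantPlan (u v : V) : V → V → ℝ :=
  let α := ((G.degree v : ℝ) + 1)⁻¹
  fun x y => if x ∈ ({u, v} : Finset V) then
    (if y = x then α else 0) + (if y ∈ (G.neighborFinset v).erase u then α / 2 else 0) else 0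

theorem Pdist_eq_ite_pair (huv : G.Adj u v) (huniq : ∀ w, G.Adj u w → w = v) (x : V) :
    Pdist G u x = if x ∈ ({u, v} : Finset V) then 1 / 2 else 0 := by
  rw [Pdist_eq_ite, ← card_neighborFinset_eq_degree, neighborFinset_eq_singleton huv huniq]
  norm_num

theorem isTransportPlan_pendantPlan (huv : G.Adj u v) (huniq : ∀ w, G.Adj u w → w = v) :
    IsTransportPlan (Pdist G u) (Pdist G v) (G.pendantPlan u v) := by
  unfold pendantPlan
  set W := (G.neighborFinset v).erase u
  have hnbr : insert v (G.neighborFinset v) = insert v (insert u W) := by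
    rw [insert_erase (G.mem_neighborFinset v u |>.mpr huv.symm)]
  have hcard : (W.card : ℝ) + 1 = G.degree v := by
    exact_mod_cast card_erase_add_one (G.mem_neighborFinset v u |>.mpr huv.symm)
  refine ⟨fun x y => ?_, fun x => ?_, fun y => ?_⟩
  · dsimp only
    split_ifs <;> positivity
  · simp only [sum_ite_irrel, sum_const_zero, sum_add_distrib, sum_ite_eq',
      mem_univ, if_true, sum_ite_mem, univ_inter, sum_const, nsmul_eq_mul]
    rw [Pdist_eq_ite_pair huv huniq]
    split_ifs
    · field_simp
      linear_combination hcard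
    · rfl
  · have huW : u ∉ W := notMem_erase u _
    have hvW : v ∉ W := fun h => G.notMem_neighborFinset_self v (mem_of_mem_erase h)
    simp only [sum_ite_mem, univ_inter, sum_pair huv.ne]
    rw [Pdist_eq_ite, hnbr]
    by_cases hyu : y = u
    · subst hyu
      simp [huv.ne, huW]
    by_cases hyv : y = v
    · subst hyv
      simp [huv.ne', hvW]
    by_cases hyW : y ∈ W
    · simp only [mem_insert, hyu, hyv, hyW, if_true, if_false, or_true, zero_add]
      ring
    · simp [hyu, hyv, hyW]

theorem transportCost_pendantPlan (huv : G.Adj u v) (huniq : ∀ w, G.Adj u w → w = v) :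
    transportCost (gdist G) (G.pendantPlan u v)
      = 3 * ((G.degree v : ℝ) - 1) / (2 * ((G.degree v : ℝ) + 1)) := by
  unfold transportCost pendantPlan
  set W := (G.neighborFinset v).erase u
  have hcard : (W.card : ℝ) + 1 = G.degree v := by
    exact_mod_cast card_erase_add_one (G.mem_neighborFinset v u |>.mpr huv.symm)
  have hdist : ∀ w ∈ W, gdist G u w = 2 ∧ gdist G v w = 1 := fun w hw => by
    have hvw : G.Adj v w := (G.mem_neighborFinset v w).mp (mem_of_mem_erase hw)
    simp [gdist, dist_eq_two_of_adj_of_forall_adj_eq huv huniq hvw (ne_of_mem_erase hw),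
      dist_eq_one_iff_adj.mpr hvw]
  simp only [mul_ite, mul_zero, sum_ite_irrel, sum_const_zero, sum_ite_mem, univ_inter,
    sum_pair huv.ne, mul_add, sum_add_distrib, sum_ite_eq', mem_univ, if_true]
  rw [sum_congr rfl fun w hw => congrArg (· * _) (hdist w hw).1,
    sum_congr rfl fun w hw => congrArg (· * _) (hdist w hw).2]
  simp only [gdist, dist_self, sum_const, nsmul_eq_mul]
  rw [← hcard]
  field_simp
  ring

theorem sum_mul_Pdist_sub_sum_mul_Pdist_eq (huv : G.Adj u v) (huniq : ∀ w, G.Adj u w → w = v) :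
    ∑ a, (2 - min (gdist G u a) 2) * Pdist G u a - ∑ b, (2 - min (gdist G u b) 2) * Pdist G v b
      = 3 * ((G.degree v : ℝ) - 1) / (2 * ((G.degree v : ℝ) + 1)) := by
  have huW : u ∉ (G.neighborFinset v).erase u := notMem_erase u _
  have hvW : v ∉ insert u ((G.neighborFinset v).erase u) := by
    simp [huv.ne', G.notMem_neighborFinset_self v]
  have hW : ∀ w ∈ (G.neighborFinset v).erase u, 2 - min (gdist G u w) 2 = 0 := fun w hw => by
    have hvw : G.Adj v w := (G.mem_neighborFinset v w).mp (mem_of_mem_erase hw)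
    simp [gdist, dist_eq_two_of_adj_of_forall_adj_eq huv huniq hvw (ne_of_mem_erase hw)]
  rw [sum_mul_Pdist, sum_mul_Pdist, neighborFinset_eq_singleton huv huniq,
    degree_eq_one_iff_existsUnique_adj.mpr ⟨v, huv, huniq⟩, sum_pair huv.ne,
    ← insert_erase (G.mem_neighborFinset v u |>.mpr huv.symm), sum_insert hvW, sum_insert huW,
    sum_eq_zero hW]
  simp only [gdist, dist_self, dist_eq_one_iff_adj.mpr huv]
  norm_num
  field_simp
  ring

end SimpleGraph

theorem emd_pendant_edge_general {V : Type} [Finite V] (G : SimpleGraph V) (hG : G.Connected)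
    (u v : V) (huv : G.Adj u v)
    (huniq : ∀ w : V, G.Adj u w → w = v) :
    EMD (gdist G) (Pdist G u) (Pdist G v)
        = 3 * ((degC G v : ℝ) - 1) / (2 * ((degC G v : ℝ) + 1)) ∧
    ricci G u v = (5 - (degC G v : ℝ)) / (2 * ((degC G v : ℝ) + 1)) := by
  classical
  have := Fintype.ofFinite V
  have hEMD : EMD (gdist G) (Pdist G u) (Pdist G v)
      = 3 * ((G.degree v : ℝ) - 1) / (2 * ((G.degree v : ℝ) + 1)) :=
    EMD_eq_of_transportCost_eq_sub (G.isTransportPlan_pendantPlan huv huniq)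
      (fun a b => by linarith [hG.min_gdist_sub_min_gdist_le u a b 2])
      (G.transportCost_pendantPlan huv huniq) (G.sum_mul_Pdist_sub_sum_mul_Pdist_eq huv huniq)
  rw [ricci, hEMD, G.degC_eq_degree]
  refine ⟨rfl, ?_⟩
  field_simp
  ring

/-- Let `G` be a finite connected simple graph with at least two
vertices, let `u` be a vertex of degree 1 with unique neighbor `v`, and let
`d = deg_G(v)`. Then `EMD_{dist_G}(P_u, P_v) = 3(d − 1)/(2(d + 1))`; equivalently, the
Ollivier–Ricci curvature of the pendant edge `{u,v}` equals
`C_G({u,v}) = (5 − d)/(2(d + 1))`. -/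
theorem emd_pendant_edge {V : Type} [Finite V] (G : SimpleGraph V) (hG : G.Connected)
    (hcard : 2 ≤ Nat.card V) (u v : V) (huv : G.Adj u v)
    (huniq : ∀ w : V, G.Adj u w → w = v) :
    EMD (gdist G) (Pdist G u) (Pdist G v)
        = 3 * ((degC G v : ℝ) - 1) / (2 * ((degC G v : ℝ) + 1)) ∧
    ricci G u v = (5 - (degC G v : ℝ)) / (2 * ((degC G v : ℝ) + 1)) :=
  emd_pendant_edge_general G hG u v huv huniq
end

section
/- In the graph G_{q,k} (q ≥ 1, k ≥ 1), the edge f = {s,t} satisfies ‖f‖_TVD = 1/(q+3), and consequently its Ollivier–Ricci curvature satisfies C_{G_{q,k}}(f) ≥ 1 − 3/(q+3). (This is claim (i) in the proof of the paper's Theorem 1, with q playing the role of √n.) -/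
/-- Vertices of the complete 10-ary tree of depth `k`: lists over `Fin 10` of length
at most `k`, recording the (reversed) path from the root `[]`. -/
def TreeVert (k : ℕ) : Type := { l : List (Fin 10) // l.length ≤ k }

instance (k : ℕ) : DecidableEq (TreeVert k) :=
  inferInstanceAs (DecidableEq { l : List (Fin 10) // l.length ≤ k })

instance (k : ℕ) : Fintype (TreeVert k) :=
  Fintype.ofSurjective
    (fun x : Σ j : Fin (k + 1), List.Vector (Fin 10) j =>
      (⟨x.2.1, by have h1 := x.2.2; have h2 := x.1.isLt; omega⟩ : TreeVert k))
    (fun y => ⟨⟨⟨y.1.length, Nat.lt_succ_of_le y.2⟩, ⟨y.1, rfl⟩⟩, Subtype.ext rfl⟩)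

/-- The root of the tree. -/
def treeRoot (k : ℕ) : TreeVert k := ⟨[], by simp⟩

/-- The parent of a tree vertex (the root is mapped to itself). -/
def treeParent {k : ℕ} (x : TreeVert k) : TreeVert k :=
  ⟨x.1.tail, by have h1 := x.2; have h2 : x.1.tail.length = x.1.length - 1 := List.length_tail; omega⟩

/-- The vertex set of the graph `G_{q,k}`: the two special vertices `s`, `t`
(encoded as `Fin 2`), the vertices `p_1, …, p_q`, and the tree vertices. -/
abbrev GVert (q k : ℕ) : Type := (Fin 2 ⊕ Fin q) ⊕ TreeVert k

def vS (q k : ℕ) : GVert q k := Sum.inl (Sum.inl 0)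
def vT (q k : ℕ) : GVert q k := Sum.inl (Sum.inl 1)
def vP (q k : ℕ) (i : Fin q) : GVert q k := Sum.inl (Sum.inr i)
def vTr (q k : ℕ) (x : TreeVert k) : GVert q k := Sum.inr x

/-- Base adjacency relation generating the edges of `G_{q,k}`: the edge `{s,t}`,
the edges `{p_i, s}` and `{p_i, t}`, the bridge `{t, r_1}` to the root of the tree,
and the parent-child tree edges. -/
def gadjBase (q k : ℕ) : GVert q k → GVert q k → Prop := fun x y =>
  (x = vS q k ∧ y = vT q k) ∨
  (∃ i : Fin q, x = vP q k i ∧ (y = vS q k ∨ y = vT q k)) ∨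
  (x = vT q k ∧ y = vTr q k (treeRoot k)) ∨
  (∃ u v : TreeVert k, x = vTr q k u ∧ y = vTr q k v ∧ ∃ a : Fin 10, u.1 = a :: v.1)

/-- The graph `G_{q,k}` from the proof of the paper's Theorem 1
(with `q` playing the role of `√n`). -/
def Gqk (q k : ℕ) : SimpleGraph (GVert q k) := SimpleGraph.fromRel (gadjBase q k)

/-- `N_k = (10^(k+1) - 1)/9`, the number of vertices of the complete 10-ary tree of depth `k`. -/
def Nk (k : ℕ) : ℕ := (10 ^ (k + 1) - 1) / 9

/-!
The closed neighbourhood of `s` is the book `B = {s, t, p_1, …, p_q}` and that of `t` is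
`B ∪ {r_1}`, so `P_s` and `P_t` are uniform on a set and on that set plus one point. Their
total variation distance is then `1/(|B| + 1)`. For the curvature, leave mass `1/(|B| + 1)` in
place on `B` and move the surplus `1/(|B|(|B| + 1))` of every vertex of `B` to `r_1`, which is
within distance 2 of `B` through `t`: this transport plan costs at most `2/(|B| + 1)`.
-/

open Finset

lemma EMD_le_of_transportPlan {V : Type} [Fintype V] (d : V → V → ℝ) (hd : ∀ x y, 0 ≤ d x y)
    (μ ν : V → ℝ) (z : V → V → ℝ) (hz : ∀ u v, 0 ≤ z u v) (hrow : ∀ u, ∑ v, z u v = μ u)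
    (hcol : ∀ v, ∑ u, z u v = ν v) :
    EMD d μ ν ≤ ∑ u, ∑ v, d u v * z u v := by
  refine csInf_le ⟨0, ?_⟩ ⟨z, hz, by simpa [finsum_eq_sum_of_fintype] using hrow,
    by simpa [finsum_eq_sum_of_fintype] using hcol, by simp [finsum_eq_sum_of_fintype]⟩
  rintro c ⟨z', hz', -, -, rfl⟩
  simp only [finsum_eq_sum_of_fintype]
  exact sum_nonneg fun u _ => sum_nonneg fun v _ => mul_nonneg (hd u v) (hz' u v)

section UniformDist

variable {V : Type} [DecidableEq V]

noncomputable def uniformDist (A : Finset V) : V → ℝ :=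
  fun w => if w ∈ A then ((#A : ℕ) : ℝ)⁻¹ else 0

lemma uniformDist_of_mem {A : Finset V} {w : V} (hw : w ∈ A) :
    uniformDist A w = ((#A : ℕ) : ℝ)⁻¹ :=
  if_pos hw

lemma uniformDist_of_notMem {A : Finset V} {w : V} (hw : w ∉ A) : uniformDist A w = 0 :=
  if_neg hw

lemma Pdist_eq_uniformDist (G : SimpleGraph V) (u : V) (N : Finset V)
    (hN : ∀ w, w ∈ N ↔ w = u ∨ G.Adj u w) : Pdist G u = uniformDist N := by
  have hu : u ∈ N := (hN u).2 (Or.inl rfl)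
  have hnbr : {x | G.Adj u x} = ↑(N.erase u) := by
    ext x
    simp only [Set.mem_ofPred_eq, coe_erase, Set.mem_sdiff, mem_coe, hN, Set.mem_singleton_iff]
    exact ⟨fun h => ⟨Or.inr h, h.ne'⟩, fun ⟨h, hne⟩ => h.resolve_left hne⟩
  have hcard : (degC G u : ℝ) + 1 = #N := by
    rw [degC, hnbr, Nat.card_coe_set_eq, Set.ncard_coe_finset, card_erase_of_mem hu,
      Nat.cast_pred (card_pos.2 ⟨u, hu⟩), sub_add_cancel]
  ext w
  by_cases hw : w ∈ N
  · rw [Pdist, uniformDist_of_mem hw, if_pos ((hN w).1 hw), hcard]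
  · rw [Pdist, uniformDist_of_notMem hw, if_neg (fun h => hw ((hN w).2 h))]

noncomputable def insertPlan (A : Finset V) (r u v : V) : ℝ :=
  if u ∈ A then
    (if v = u then ((#A : ℝ) + 1)⁻¹ else 0) + (if v = r then ((#A : ℝ) * (#A + 1))⁻¹ else 0)
  else 0

variable {A : Finset V} {r : V}

lemma insertPlan_nonneg (u v : V) : 0 ≤ insertPlan A r u v := by
  unfold insertPlan
  split_ifs <;> positivity

variable [Fintype V]

lemma sum_abs_uniformDist_sub_insert (hr : r ∉ A) (hA : A.Nonempty) :
    ∑ w, |uniformDist A w - uniformDist (insert r A) w| = 2 / ((#A : ℝ) + 1) := by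
  have ha : (0 : ℝ) < #A := Nat.cast_pos.2 hA.card_pos
  have hcard : ((#(insert r A) : ℕ) : ℝ) = #A + 1 := by
    rw [card_insert_of_notMem hr, Nat.cast_succ]
  have hmem : ∀ w ∈ A, |uniformDist A w - uniformDist (insert r A) w|
      = ((#A : ℕ) : ℝ)⁻¹ - ((#A : ℝ) + 1)⁻¹ := by
    intro w hw
    rw [uniformDist_of_mem hw, uniformDist_of_mem (mem_insert_of_mem hw), hcard,
      abs_of_nonneg (sub_nonneg.2 (inv_anti₀ ha (by linarith)))]
  have hout : ∀ w ∉ insert r A, |uniformDist A w - uniformDist (insert r A) w| = 0 := by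
    intro w hw
    rw [uniformDist_of_notMem hw, uniformDist_of_notMem (fun h => hw (mem_insert_of_mem h)),
      sub_zero, abs_zero]
  rw [← sum_subset (subset_univ _) (fun w _ hw => hout w hw), sum_insert hr,
    sum_congr rfl hmem, sum_const, nsmul_eq_mul, uniformDist_of_notMem hr,
    uniformDist_of_mem (mem_insert_self r A), hcard, zero_sub, abs_neg,
    abs_of_nonneg (by positivity)]
  field_simp
  ring

lemma sum_insertPlan_right (hA : A.Nonempty) (u : V) :
    ∑ v, insertPlan A r u v = uniformDist A u := by
  have ha : (0 : ℝ) < #A := Nat.cast_pos.2 hA.card_pos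
  by_cases hu : u ∈ A
  · simp only [insertPlan, if_pos hu, sum_add_distrib, Fintype.sum_ite_eq',
      uniformDist_of_mem hu]
    field_simp
  · simp only [insertPlan, if_neg hu, sum_const_zero, uniformDist_of_notMem hu]

lemma sum_insertPlan_left (hr : r ∉ A) (hA : A.Nonempty) (v : V) :
    ∑ u, insertPlan A r u v = uniformDist (insert r A) v := by
  have ha : (0 : ℝ) < #A := Nat.cast_pos.2 hA.card_pos
  have hcard : ((#(insert r A) : ℕ) : ℝ) = #A + 1 := by
    rw [card_insert_of_notMem hr, Nat.cast_succ]
  simp only [insertPlan, sum_ite_mem, univ_inter, sum_add_distrib, sum_ite_eq, sum_const,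
    nsmul_eq_mul]
  by_cases hv : v ∈ A
  · rw [if_pos hv, if_neg (fun h : v = r => hr (h ▸ hv)),
      uniformDist_of_mem (mem_insert_of_mem hv), hcard, mul_zero, add_zero]
  · by_cases hvr : v = r
    · rw [if_neg hv, if_pos hvr, uniformDist_of_mem (hvr ▸ mem_insert_self r A), hcard,
        zero_add]
      field_simp
    · rw [if_neg hv, if_neg hvr, uniformDist_of_notMem (by simp [hv, hvr]), mul_zero,
        add_zero]

lemma EMD_uniformDist_insert_le (d : V → V → ℝ) (hd : ∀ x y, 0 ≤ d x y)
    (hdiag : ∀ x, d x x = 0) (hr : r ∉ A) (hA : A.Nonempty) (D : ℝ)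
    (hD : ∀ a ∈ A, d a r ≤ D) :
    EMD d (uniformDist A) (uniformDist (insert r A)) ≤ D / ((#A : ℝ) + 1) := by
  have ha : (0 : ℝ) < #A := Nat.cast_pos.2 hA.card_pos
  have hcost : ∀ u ∈ A, ∑ v, d u v * insertPlan A r u v ≤ D * ((#A : ℝ) * (#A + 1))⁻¹ := by
    intro u hu
    simp only [insertPlan, if_pos hu, mul_add, mul_ite, mul_zero, sum_add_distrib,
      Fintype.sum_ite_eq', hdiag, zero_mul, zero_add]
    exact mul_le_mul_of_nonneg_right (hD u hu) (by positivity)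
  calc EMD d (uniformDist A) (uniformDist (insert r A))
      ≤ ∑ u, ∑ v, d u v * insertPlan A r u v :=
        EMD_le_of_transportPlan d hd _ _ _ insertPlan_nonneg (sum_insertPlan_right hA)
          (sum_insertPlan_left hr hA)
    _ = ∑ u ∈ A, ∑ v, d u v * insertPlan A r u v := by
      refine (sum_subset (subset_univ A) fun u _ hu => ?_).symm
      simp only [insertPlan, if_neg hu, mul_zero, sum_const_zero]
    _ ≤ ∑ _u ∈ A, D * ((#A : ℝ) * (#A + 1))⁻¹ := sum_le_sum hcost
    _ = D / ((#A : ℝ) + 1) := by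
      rw [sum_const, nsmul_eq_mul]
      field_simp

end UniformDist

section Gqk

variable (q k : ℕ)

lemma Gqk_adj_vS_iff (x : GVert q k) :
    (Gqk q k).Adj (vS q k) x ↔ x = vT q k ∨ ∃ i, x = vP q k i := by
  simp only [Gqk, SimpleGraph.fromRel_adj, gadjBase, vS, vT, vP, vTr]
  aesop

lemma Gqk_adj_vT_iff (x : GVert q k) :
    (Gqk q k).Adj (vT q k) x ↔
      x = vS q k ∨ (∃ i, x = vP q k i) ∨ x = vTr q k (treeRoot k) := by
  simp only [Gqk, SimpleGraph.fromRel_adj, gadjBase, vS, vT, vP, vTr]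
  aesop

def bookVerts : Finset (GVert q k) :=
  insert (vS q k) (insert (vT q k) (univ.image (vP q k)))

lemma mem_bookVerts_iff (w : GVert q k) :
    w ∈ bookVerts q k ↔ w = vS q k ∨ (Gqk q k).Adj (vS q k) w := by
  simp [bookVerts, Gqk_adj_vS_iff, eq_comm]

lemma mem_insert_root_bookVerts_iff (w : GVert q k) :
    w ∈ insert (vTr q k (treeRoot k)) (bookVerts q k) ↔
      w = vT q k ∨ (Gqk q k).Adj (vT q k) w := by
  simp only [bookVerts, mem_insert, mem_image, mem_univ, eq_comm, true_and, Gqk_adj_vT_iff]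
  tauto

lemma card_bookVerts : #(bookVerts q k) = q + 2 := by
  rw [bookVerts, card_insert_of_notMem (by simp [vS, vT, vP]),
    card_insert_of_notMem (by simp [vT, vP]),
    card_image_of_injective _ (fun i j h => by simpa [vP] using h), card_univ, Fintype.card_fin]

lemma vTr_notMem_bookVerts (x : TreeVert k) : vTr q k x ∉ bookVerts q k := by
  simp [bookVerts, vTr, vS, vT, vP]

lemma Gqk_dist_root_le_two {a : GVert q k} (ha : a ∈ bookVerts q k) :
    (Gqk q k).dist a (vTr q k (treeRoot k)) ≤ 2 := by
  have hroot : (Gqk q k).Adj (vT q k) (vTr q k (treeRoot k)) :=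
    (Gqk_adj_vT_iff q k _).2 (Or.inr (Or.inr rfl))
  rcases (mem_insert_root_bookVerts_iff q k a).1 (mem_insert_of_mem ha) with rfl | hadj
  · exact (SimpleGraph.dist_le hroot.toWalk).trans (by simp)
  · exact (SimpleGraph.dist_le (.cons hadj.symm hroot.toWalk)).trans (by simp)

end Gqk

theorem tvd_st_edge_general (q k : ℕ) :
    tvd (Gqk q k) (vS q k) (vT q k) = 1 / ((q : ℝ) + 3) ∧
    1 - 3 / ((q : ℝ) + 3) ≤ ricci (Gqk q k) (vS q k) (vT q k) := by
  have hS := Pdist_eq_uniformDist _ _ _ (mem_bookVerts_iff q k)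
  have hT := Pdist_eq_uniformDist _ _ _ (mem_insert_root_bookVerts_iff q k)
  have hroot := vTr_notMem_bookVerts q k (treeRoot k)
  have hne : (bookVerts q k).Nonempty := ⟨vS q k, mem_insert_self _ _⟩
  have hcard : ((#(bookVerts q k) : ℕ) : ℝ) + 1 = q + 3 := by
    rw [card_bookVerts]; push_cast; ring
  constructor
  · rw [tvd, hS, hT, finsum_eq_sum_of_fintype, sum_abs_uniformDist_sub_insert hroot hne, hcard]
    ring
  · have hEMD := EMD_uniformDist_insert_le (gdist (Gqk q k)) (fun _ _ => Nat.cast_nonneg _)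
      (fun _ => by simp [gdist]) hroot hne 2
      (fun a ha => by unfold gdist; exact_mod_cast Gqk_dist_root_le_two q k ha)
    rw [hcard] at hEMD
    have h23 : 2 / ((q : ℝ) + 3) ≤ 3 / ((q : ℝ) + 3) := by gcongr; norm_num
    rw [ricci, hS, hT]
    linarith

/-- In the graph `G_{q,k}` (`q ≥ 1`, `k ≥ 1`), the edge `f = {s,t}`
satisfies `‖f‖_TVD = 1/(q+3)`, and consequently its Ollivier–Ricci curvature satisfies
`C_{G_{q,k}}(f) ≥ 1 − 3/(q+3)`. -/
theorem tvd_st_edge (q k : ℕ) (hq : 1 ≤ q) (hk : 1 ≤ k) :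
    tvd (Gqk q k) (vS q k) (vT q k) = 1 / ((q : ℝ) + 3) ∧
    1 - 3 / ((q : ℝ) + 3) ≤ ricci (Gqk q k) (vS q k) (vT q k) :=
  tvd_st_edge_general q k
end
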